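/- arXiv:2211.02044 — 2 statements merged into one kernel-verified Lean document; each statement's English description precedes it below -/
import Mathlib

section
/- Let L ≥ 2, α, β, γ ∈ ℝ with β > 0, γ ≠ 0 and α + 2β ≥ γ²/β. Let Z_L be the L×L symmetric tridiagonal matrix whose first row is (0, γ, 0, …, 0), whose lower-right (L-1)×(L-1) block is the tridiagonal Toeplitz matrix with α on the diagonal and β on the adjacent diagonals, and with γ in positions (1,2) and (2,1). Then every eigenvalue of Z_L is at most α + 2β, and the largest eigenvalue of Z_L converges to α + 2β as L → ∞. -/
/-!
For every `y`,
`(α + 2β) ‖y‖² - yᵀ Z_L y`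
`  = ((α + 2β) y₀² - 2γ y₀ y₁ + β y₁²) + β ∑_{n=1}^{L-2} (yₙ - yₙ₊₁)² + β y_{L-1}²`,
and the binary form in the first bracket is nonnegative because `γ² ≤ (α + 2β) β`; hence
`Z_L ≤ (α + 2β) • 1`. Conversely, the vector `(0, 1, …, 1)` has Rayleigh quotient
`α + 2β - 2β / (L - 1)`, which bounds the largest eigenvalue from below.
-/

open Matrix

/-- The `L×L` symmetric tridiagonal matrix `Z_L` with `0` in the top-left corner, `γ` in
positions `(1,2)` and `(2,1)`, `α` on the rest of the diagonal and `β` on the rest of the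
adjacent diagonals (1-based description, 0-based implementation). -/
def Zmat (α β γ : ℝ) (L : ℕ) : Matrix (Fin L) (Fin L) ℝ :=
  fun i j =>
    if i = j then (if i.val = 0 then 0 else α)
    else if i.val + 1 = j.val ∨ j.val + 1 = i.val then
      (if min i.val j.val = 0 then γ else β)
    else 0

open Finset

open scoped MatrixOrder in
theorem Matrix.IsHermitian.eigenvalues_le_iff {n : Type*} [Fintype n] [DecidableEq n]
    {A : Matrix n n ℝ} (hA : A.IsHermitian) (c : ℝ) :
    (∀ i, hA.eigenvalues i ≤ c) ↔ ∀ x : n → ℝ, x ⬝ᵥ A *ᵥ x ≤ c * (x ⬝ᵥ x) := by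
  have hspec := le_algebraMap_iff_spectrum_le (R := ℝ) (r := c) (a := A) hA
  rw [hA.spectrum_real_eq_range_eigenvalues, Set.forall_mem_range] at hspec
  rw [← hspec, Matrix.le_iff, posSemidef_iff_dotProduct_mulVec, Algebra.algebraMap_eq_smul_one,
    and_iff_right ((isHermitian_one.smul (IsSelfAdjoint.all c)).sub hA)]
  simp [sub_mulVec, dotProduct_sub, smul_mulVec]

theorem dotProduct_self_eq_sum_range_sq {R : Type*} [CommSemiring R] {L : ℕ} (y : ℕ → R) :
    (fun i : Fin L => y i) ⬝ᵥ (fun i => y i) = ∑ n ∈ range L, y n ^ 2 := by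
  rw [dotProduct, ← Fin.sum_univ_eq_sum_range]
  simp [sq]

def tailOnes (n : ℕ) : ℝ := if n = 0 then 0 else 1

theorem sum_range_tailOnes_sq {L : ℕ} (hL : 1 ≤ L) :
    ∑ n ∈ range L, tailOnes n ^ 2 = L - 1 := by
  obtain ⟨k, rfl⟩ : ∃ k, L = k + 1 := ⟨L - 1, by omega⟩
  simp [sum_range_succ', tailOnes]

namespace Zmat

variable {α β γ : ℝ} {L : ℕ}

variable (α β γ) in
/-- `Zmat α β γ L` is the top-left `L × L` corner of this `ℕ × ℕ` matrix. -/
def entry (m n : ℕ) : ℝ :=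
  if m = n then (if m = 0 then 0 else α)
  else if m + 1 = n ∨ n + 1 = m then (if min m n = 0 then γ else β)
  else 0

variable (α β γ) in
def quadForm (L : ℕ) (y : ℕ → ℝ) : ℝ :=
  ∑ m ∈ range L, ∑ n ∈ range L, y m * entry α β γ m n * y n

theorem apply_eq_entry (i j : Fin L) : Zmat α β γ L i j = entry α β γ i j := by
  simp [Zmat, entry, Fin.ext_iff]

theorem entry_comm (m n : ℕ) : entry α β γ m n = entry α β γ n m := by
  unfold entry
  split_ifs <;> first | rfl | omega

theorem entry_of_succ_lt {m n : ℕ} (h : m + 1 < n) : entry α β γ m n = 0 := by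
  unfold entry
  split_ifs <;> first | rfl | omega

theorem entry_succ {m : ℕ} (hm : m ≠ 0) : entry α β γ m (m + 1) = β := by
  unfold entry
  split_ifs <;> first | rfl | omega

theorem dotProduct_mulVec_eq_quadForm (y : ℕ → ℝ) :
    (fun i : Fin L => y i) ⬝ᵥ Zmat α β γ L *ᵥ (fun i => y i) = quadForm α β γ L y := by
  simp only [dotProduct, mulVec, apply_eq_entry, mul_sum, quadForm]
  rw [← Fin.sum_univ_eq_sum_range (fun m => ∑ n ∈ range L, y m * entry α β γ m n * y n)]
  refine sum_congr rfl fun i _ => ?_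
  rw [← Fin.sum_univ_eq_sum_range (fun n => y i * entry α β γ i n * y n)]
  exact sum_congr rfl fun j _ => by ring

theorem quadForm_two (y : ℕ → ℝ) : quadForm α β γ 2 y = 2 * γ * y 0 * y 1 + α * y 1 ^ 2 := by
  simp [quadForm, sum_range_succ, entry]
  ring

theorem quadForm_succ (hL : 2 ≤ L) (y : ℕ → ℝ) :
    quadForm α β γ (L + 1) y = quadForm α β γ L y + 2 * β * y (L - 1) * y L + α * y L ^ 2 := by
  obtain ⟨k, rfl⟩ : ∃ k, L = k + 1 := ⟨L - 1, by omega⟩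
  have hcol : ∑ m ∈ range (k + 1), y m * entry α β γ m (k + 1) * y (k + 1)
      = β * y k * y (k + 1) := by
    rw [sum_range_succ, sum_eq_zero fun m hm => ?_, entry_succ (by omega), zero_add]
    · ring
    · rw [entry_of_succ_lt (by simpa using hm), mul_zero, zero_mul]
  have hrow : ∑ n ∈ range (k + 1), y (k + 1) * entry α β γ (k + 1) n * y n
      = β * y k * y (k + 1) := by
    rw [← hcol]
    exact sum_congr rfl fun m _ => by rw [entry_comm]; ring
  have hdiag : entry α β γ (k + 1) (k + 1) = α := by simp [entry]
  simp only [quadForm, sum_range_succ _ (k + 1), sum_add_distrib, hdiag, hcol, hrow,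
    Nat.add_sub_cancel]
  ring

theorem quadForm_add_le (hβ : 0 < β) (hγ : γ ^ 2 ≤ (α + 2 * β) * β) (hL : 2 ≤ L)
    (y : ℕ → ℝ) :
    quadForm α β γ L y + β * y (L - 1) ^ 2 ≤ (α + 2 * β) * ∑ n ∈ range L, y n ^ 2 := by
  induction L, hL using Nat.le_induction with
  | base =>
    have hbinary : 0 ≤ (α + 2 * β) * y 0 ^ 2 - 2 * γ * y 0 * y 1 + β * y 1 ^ 2 := by
      refine nonneg_of_mul_nonneg_right ?_ hβ
      nlinarith [sq_nonneg (β * y 1 - γ * y 0), sq_nonneg (y 0)]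
    simp only [quadForm_two, sum_range_succ, sum_range_zero]
    linarith
  | succ L hL ih =>
    rw [quadForm_succ hL, sum_range_succ, Nat.add_sub_cancel]
    nlinarith [sq_nonneg (y (L - 1) - y L)]

theorem quadForm_tailOnes (hL : 2 ≤ L) :
    quadForm α β γ L tailOnes = α * (L - 1) + 2 * β * (L - 2) := by
  induction L, hL using Nat.le_induction with
  | base => norm_num [quadForm_two, tailOnes]
  | succ L hL ih =>
    rw [quadForm_succ hL, ih]
    simp [tailOnes, show L ≠ 0 by omega, show L - 1 ≠ 0 by omega]
    ring

theorem eigenvalues_le (hβ : 0 < β) (hγ : γ ^ 2 ≤ (α + 2 * β) * β) (hL : 2 ≤ L)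
    (hZ : (Zmat α β γ L).IsHermitian) (i : Fin L) : hZ.eigenvalues i ≤ α + 2 * β := by
  refine (hZ.eigenvalues_le_iff _).2 (fun x => ?_) i
  obtain ⟨y, rfl⟩ : ∃ y : ℕ → ℝ, (fun i : Fin L => y i) = x :=
    ⟨fun n => if hn : n < L then x ⟨n, hn⟩ else 0, funext fun i => by simp⟩
  rw [dotProduct_mulVec_eq_quadForm, dotProduct_self_eq_sum_range_sq]
  nlinarith [quadForm_add_le hβ hγ hL y, sq_nonneg (y (L - 1))]

theorem exists_eigenvalue_ge (hL : 2 ≤ L) (hZ : (Zmat α β γ L).IsHermitian) :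
    ∃ i, α + 2 * β - 2 * β / (L - 1) ≤ hZ.eigenvalues i := by
  have : Nonempty (Fin L) := ⟨⟨0, by omega⟩⟩
  obtain ⟨i, -, hmax⟩ := exists_max_image univ hZ.eigenvalues univ_nonempty
  have hrayleigh := (hZ.eigenvalues_le_iff _).1 (fun j => hmax j (mem_univ j))
    (fun j : Fin L => tailOnes j)
  rw [dotProduct_mulVec_eq_quadForm, dotProduct_self_eq_sum_range_sq, quadForm_tailOnes hL,
    sum_range_tailOnes_sq (by omega)] at hrayleigh
  have hL1 : (0 : ℝ) < L - 1 := by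
    have : (2 : ℝ) ≤ L := by exact_mod_cast hL
    linarith
  refine ⟨i, ?_⟩
  rw [sub_le_comm, le_div_iff₀ hL1]
  linarith

end Zmat

theorem Zmat_eigenvalue_bound_general (α β γ : ℝ) (hβ : 0 < β)
    (h : α + 2 * β ≥ γ ^ 2 / β) :
    (∀ L : ℕ, 2 ≤ L → ∀ hZ : (Zmat α β γ L).IsHermitian,
      ∀ i, hZ.eigenvalues i ≤ α + 2 * β) ∧
    (∀ ε : ℝ, 0 < ε → ∃ L₀ : ℕ, ∀ L : ℕ, L₀ ≤ L →
      ∀ hZ : (Zmat α β γ L).IsHermitian, ∃ i, α + 2 * β - ε < hZ.eigenvalues i) := by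
  have hγ : γ ^ 2 ≤ (α + 2 * β) * β := (div_le_iff₀ hβ).1 h
  refine ⟨fun L hL hZ i => Zmat.eigenvalues_le hβ hγ hL hZ i, fun ε hε => ?_⟩
  obtain ⟨N, hN⟩ := exists_nat_gt (2 * β / ε)
  refine ⟨N + 2, fun L hL hZ => ?_⟩
  obtain ⟨i, hi⟩ := Zmat.exists_eigenvalue_ge (by omega) hZ
  have hL' : (N : ℝ) + 2 ≤ L := by exact_mod_cast hL
  have hgap : 2 * β / (L - 1) < ε := by
    rw [div_lt_iff₀ hε] at hN
    rw [div_lt_iff₀ (by linarith)]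
    nlinarith
  exact ⟨i, by linarith⟩

/-- If `β > 0`, `γ ≠ 0` and `α + 2β ≥ γ²/β`, then every eigenvalue of `Z_L` is at most
`α + 2β`, and the largest eigenvalue of `Z_L` converges to `α + 2β` as `L → ∞`. -/
theorem Zmat_eigenvalue_bound (α β γ : ℝ) (hβ : 0 < β) (hγ : γ ≠ 0)
    (h : α + 2 * β ≥ γ ^ 2 / β) :
    (∀ L : ℕ, 2 ≤ L → ∀ hZ : (Zmat α β γ L).IsHermitian,
      ∀ i, hZ.eigenvalues i ≤ α + 2 * β) ∧
    (∀ ε : ℝ, 0 < ε → ∃ L₀ : ℕ, ∀ L : ℕ, L₀ ≤ L →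
      ∀ hZ : (Zmat α β γ L).IsHermitian, ∃ i, α + 2 * β - ε < hZ.eigenvalues i) :=
  Zmat_eigenvalue_bound_general α β γ hβ h
end

section
/- Let b > 1 and L ∈ ℕ. Define the L×L matrices A_L with entries (A_L)_{i,j} = (1/2)·b^{min(i,j)-1} for i ≠ j and 0 for i = j, and B_L with entries (B_L)_{i,j} = (1/2)·b^{min(i,j)-1}. Then B_L is positive definite and for every nonzero x ∈ ℝ^L one has (xᵀ A_L x)/(xᵀ B_L x) ≤ 2(√b - 1)/(b - 1). -/
open Matrix

/-- The matrix `A_L` with entries `(1/2)·b^{min(i,j)-1}` off the diagonal and `0` on the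
diagonal (1-based description; with 0-based indices the exponent is `min i j`). -/
noncomputable def Amat (b : ℝ) (L : ℕ) : Matrix (Fin L) (Fin L) ℝ :=
  fun i j => if i = j then 0 else (1 / 2) * b ^ (min i.val j.val)

/-- The matrix `B_L` with entries `(1/2)·b^{min(i,j)-1}` (1-based description). -/
noncomputable def Bmat (b : ℝ) (L : ℕ) : Matrix (Fin L) (Fin L) ℝ :=
  fun i j => (1 / 2) * b ^ (min i.val j.val)

/-!
With `r = √b` one has `b ^ min i j = r ^ i * r⁻¹ ^ |i - j| * r ^ j`, so in the variables
`y i = r ^ i * x i` the form of `B_L` is half the form of the Kac–Murdock–Szegő matrix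
`K i j = r⁻¹ ^ |i - j|`, and the form of `A_L` is half of `yᵀ K y - yᵀ y`. Every row of `K` sums to
at most `(1 + r⁻¹) / (1 - r⁻¹) = (r + 1) / (r - 1)`, so the Schur test gives
`yᵀ K y ≤ (r + 1) / (r - 1) * yᵀ y`, which rearranges to the bound
`2 / (r + 1) = 2 (√b - 1) / (b - 1)`.

Positive definiteness comes from `b ^ m = ∑_{k ≤ m} (b ^ k - b ^ (k - 1))` (with `b ^ (-1) = 0`),
which writes `B_L = Uᵀ D U` with `U` unitriangular and `D` a positive diagonal matrix.
-/

open Finset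

theorem Matrix.dotProduct_mulVec_le_of_sum_abs_le {ι K : Type*} [Fintype ι] [Field K]
    [LinearOrder K] [IsStrictOrderedRing K] {M : Matrix ι ι K} (hM : M.IsSymm) {C : K}
    (hrow : ∀ i, ∑ j, |M i j| ≤ C) (x : ι → K) :
    x ⬝ᵥ M *ᵥ x ≤ C * (x ⬝ᵥ x) := by
  have hamgm : ∀ i j, x i * (M i j * x j) ≤ |M i j| * x i ^ 2 / 2 + |M j i| * x j ^ 2 / 2 := by
    intro i j
    rw [← hM.apply i j]
    rcases abs_cases (M j i) with ⟨h, hM0⟩ | ⟨h, hM0⟩ <;> rw [h]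
    · nlinarith [mul_nonneg hM0 (sq_nonneg (x i - x j))]
    · nlinarith [mul_nonneg (neg_nonneg.2 hM0.le) (sq_nonneg (x i + x j))]
  calc x ⬝ᵥ M *ᵥ x = ∑ i, ∑ j, x i * (M i j * x j) := by
        simp only [dotProduct, mulVec, mul_sum]
    _ ≤ ∑ i, ∑ j, (|M i j| * x i ^ 2 / 2 + |M j i| * x j ^ 2 / 2) :=
        sum_le_sum fun i _ => sum_le_sum fun j _ => hamgm i j
    _ = ∑ i, (∑ j, |M i j|) * x i ^ 2 := by
        rw [← add_halves (∑ i, (∑ j, |M i j|) * x i ^ 2)]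
        simp only [sum_add_distrib]
        rw [sum_comm (f := fun i j => |M j i| * x j ^ 2 / 2)]
        simp only [sum_div, sum_mul]
    _ ≤ ∑ i, C * x i ^ 2 :=
        sum_le_sum fun i _ => mul_le_mul_of_nonneg_right (hrow i) (sq_nonneg _)
    _ = C * (x ⬝ᵥ x) := by simp only [dotProduct, mul_sum, sq]

theorem Matrix.dotProduct_transpose_mul_mul_mulVec {ι R : Type*} [Fintype ι] [CommSemiring R]
    (D M : Matrix ι ι R) (x : ι → R) :
    x ⬝ᵥ (Dᵀ * M * D) *ᵥ x = (D *ᵥ x) ⬝ᵥ M *ᵥ (D *ᵥ x) := by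
  rw [← mulVec_mulVec, ← mulVec_mulVec, dotProduct_mulVec, vecMul_transpose]

theorem sum_range_pow_dist_le {K : Type*} [Field K] [LinearOrder K] [IsStrictOrderedRing K]
    {s : K} (hs0 : 0 ≤ s) (hs1 : s < 1) (i n : ℕ) :
    ∑ j ∈ range n, s ^ Nat.dist i j ≤ (1 + s) / (1 - s) := by
  have hlow : ∑ j ∈ range (i + 1), s ^ Nat.dist i j = ∑ k ∈ Ico 0 (i + 1), s ^ k := by
    rw [← range_eq_Ico, ← sum_range_reflect (fun k => s ^ k)]
    refine sum_congr rfl fun j hj => ?_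
    rw [mem_range] at hj
    rw [Nat.dist_eq_sub_of_le_right (by omega), Nat.add_sub_cancel]
  have hhigh : ∑ j ∈ Ico (i + 1) (i + 1 + n), s ^ Nat.dist i j = ∑ k ∈ Ico 1 (n + 1), s ^ k := by
    rw [← sum_Ico_add_right_sub_eq (f := fun k => s ^ k) 1 (n + 1) i]
    refine sum_congr (by congr 1 <;> omega) fun j hj => ?_
    rw [mem_Ico] at hj
    rw [Nat.dist_eq_sub_of_le (by omega)]
  calc ∑ j ∈ range n, s ^ Nat.dist i j ≤ ∑ j ∈ range (i + 1 + n), s ^ Nat.dist i j :=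
        sum_le_sum_of_subset_of_nonneg (range_subset_range.2 (by omega))
          fun _ _ _ => pow_nonneg hs0 _
    _ = ∑ k ∈ Ico 0 (i + 1), s ^ k + ∑ k ∈ Ico 1 (n + 1), s ^ k := by
        rw [← sum_range_add_sum_Ico _ (by omega : i + 1 ≤ i + 1 + n), hlow, hhigh]
    _ ≤ s ^ 0 / (1 - s) + s ^ 1 / (1 - s) :=
        add_le_add (geom_sum_Ico_le_of_lt_one hs0 hs1) (geom_sum_Ico_le_of_lt_one hs0 hs1)
    _ = (1 + s) / (1 - s) := by rw [pow_zero, pow_one, add_div]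

def kmsMatrix (s : ℝ) (L : ℕ) : Matrix (Fin L) (Fin L) ℝ :=
  fun i j => s ^ Nat.dist i j

theorem kmsMatrix_isSymm (s : ℝ) (L : ℕ) : (kmsMatrix s L).IsSymm :=
  IsSymm.ext fun i j => by simp only [kmsMatrix, Nat.dist_comm]

theorem kmsMatrix_dotProduct_mulVec_le {s : ℝ} (hs0 : 0 ≤ s) (hs1 : s < 1) {L : ℕ}
    (y : Fin L → ℝ) : y ⬝ᵥ kmsMatrix s L *ᵥ y ≤ (1 + s) / (1 - s) * (y ⬝ᵥ y) := by
  refine dotProduct_mulVec_le_of_sum_abs_le (kmsMatrix_isSymm s L) (fun i => ?_) y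
  simp only [kmsMatrix, abs_pow, abs_of_nonneg hs0]
  exact (Fin.sum_univ_eq_sum_range (fun j => s ^ Nat.dist i j) L).trans_le
    (sum_range_pow_dist_le hs0 hs1 i L)

theorem pow_mul_inv_pow_dist_mul_pow {G : Type*} [CommGroupWithZero G] {r : G} (hr : r ≠ 0)
    (i j : ℕ) : r ^ i * r⁻¹ ^ Nat.dist i j * r ^ j = (r ^ 2) ^ min i j := by
  have hexp : i + j = 2 * min i j + Nat.dist i j := by
    rw [Nat.dist_eq_max_sub_min]; omega
  rw [mul_right_comm, ← pow_add, hexp, pow_add, mul_assoc, ← mul_pow,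
    mul_inv_cancel₀ hr, one_pow, mul_one, pow_mul]

theorem Bmat_eq_kmsMatrix {b : ℝ} (hb : 0 < b) (L : ℕ) :
    Bmat b L = (1 / 2 : ℝ) • ((diagonal fun i : Fin L => √b ^ (i : ℕ))ᵀ *
      kmsMatrix (√b)⁻¹ L * diagonal fun i : Fin L => √b ^ (i : ℕ)) := by
  ext i j
  simp only [Bmat, Matrix.smul_apply, diagonal_transpose, diagonal_mul, mul_diagonal, kmsMatrix,
    pow_mul_inv_pow_dist_mul_pow (Real.sqrt_pos.2 hb).ne', Real.sq_sqrt hb.le, smul_eq_mul]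

theorem Amat_eq_Bmat_sub (b : ℝ) (L : ℕ) :
    Amat b L = Bmat b L - (1 / 2 : ℝ) • diagonal fun i : Fin L => b ^ (i : ℕ) := by
  ext i j
  rcases eq_or_ne i j with rfl | hij
  · simp [Amat, Bmat]
  · simp [Amat, Bmat, hij]

def powIncrement (b : ℝ) : ℕ → ℝ
  | 0 => 1
  | k + 1 => (b - 1) * b ^ k

theorem sum_range_succ_powIncrement (b : ℝ) (n : ℕ) :
    ∑ k ∈ range (n + 1), powIncrement b k = b ^ n := by
  induction n with
  | zero => simp [powIncrement]
  | succ n ih => rw [sum_range_succ, ih, powIncrement]; ring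

theorem powIncrement_pos {b : ℝ} (hb : 1 < b) (k : ℕ) : 0 < powIncrement b k := by
  cases k with
  | zero => exact one_pos
  | succ k => exact mul_pos (sub_pos.2 hb) (pow_pos (by linarith) k)

def upperOnes (L : ℕ) : Matrix (Fin L) (Fin L) ℝ :=
  fun k i => if k ≤ i then 1 else 0

theorem isUnit_upperOnes (L : ℕ) : IsUnit (upperOnes L) := by
  have hU : (upperOnes L).IsUpperTriangular := fun i j hji => if_neg (not_le.2 hji)
  rw [isUnit_iff_isUnit_det, det_of_isUpperTriangular hU]
  simp [upperOnes]

theorem Fin.sum_ite_val_le {M : Type*} [AddCommMonoid M] (f : ℕ → M) {m L : ℕ} (hm : m < L) :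
    ∑ k : Fin L, (if (k : ℕ) ≤ m then f k else 0) = ∑ k ∈ range (m + 1), f k := by
  rw [Fin.sum_univ_eq_sum_range (fun k => if k ≤ m then f k else 0), ← sum_filter]
  congr 1
  ext k
  simp only [mem_filter, mem_range]
  omega

theorem Bmat_eq_upperOnes (b : ℝ) (L : ℕ) :
    Bmat b L = (upperOnes L)ᵀ * diagonal (fun k : Fin L => powIncrement b k / 2) * upperOnes L := by
  ext i j
  have hsum := Fin.sum_ite_val_le (fun k => powIncrement b k / 2)
    (lt_of_le_of_lt (min_le_left _ _) i.isLt : min (i : ℕ) j < L)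
  rw [← sum_div, sum_range_succ_powIncrement] at hsum
  rw [Bmat, one_div_mul_eq_div, ← hsum, mul_apply]
  refine sum_congr rfl fun k _ => ?_
  simp only [mul_diagonal, transpose_apply, upperOnes, le_min_iff, Fin.le_def]
  split_ifs <;> simp_all

theorem Bmat_posDef {b : ℝ} (hb : 1 < b) (L : ℕ) : (Bmat b L).PosDef := by
  rw [Bmat_eq_upperOnes, ← conjTranspose_eq_transpose_of_trivial]
  have hD : (diagonal fun k : Fin L => powIncrement b k / 2).PosDef :=
    .diagonal fun k => half_pos (powIncrement_pos hb k)
  exact hD.conjTranspose_mul_mul_same (mulVec_injective_of_isUnit (isUnit_upperOnes L))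

theorem quad_form_ratio_bound_general (b : ℝ) (hb : 1 < b) (L : ℕ) :
    (Bmat b L).PosDef ∧
    ∀ x : Fin L → ℝ, x ≠ 0 →
      (x ⬝ᵥ (Amat b L).mulVec x) / (x ⬝ᵥ (Bmat b L).mulVec x)
        ≤ 2 * (Real.sqrt b - 1) / (b - 1) := by
  refine ⟨Bmat_posDef hb L, fun x hx => ?_⟩
  set r := √b
  have hr2 : r ^ 2 = b := Real.sq_sqrt (by linarith)
  have hr1 : 1 < r := by rw [← Real.sqrt_one]; exact Real.sqrt_lt_sqrt zero_le_one hb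
  set y := (diagonal fun i : Fin L => r ^ (i : ℕ)) *ᵥ x
  have hB : x ⬝ᵥ Bmat b L *ᵥ x = 1 / 2 * (y ⬝ᵥ kmsMatrix r⁻¹ L *ᵥ y) := by
    rw [Bmat_eq_kmsMatrix (by linarith), smul_mulVec, dotProduct_smul,
      dotProduct_transpose_mul_mul_mulVec, smul_eq_mul]
  have hyy : y ⬝ᵥ y = x ⬝ᵥ (diagonal fun i : Fin L => b ^ (i : ℕ)) *ᵥ x := by
    simp only [y, dotProduct, mulVec_diagonal, ← hr2]
    exact sum_congr rfl fun i _ => by ring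
  have hA : x ⬝ᵥ Amat b L *ᵥ x = 1 / 2 * (y ⬝ᵥ kmsMatrix r⁻¹ L *ᵥ y - y ⬝ᵥ y) := by
    rw [Amat_eq_Bmat_sub, sub_mulVec, dotProduct_sub, hB, hyy, smul_mulVec, dotProduct_smul,
      smul_eq_mul, mul_sub]
  have hK := kmsMatrix_dotProduct_mulVec_le (inv_nonneg.2 (by linarith : (0 : ℝ) ≤ r))
    (inv_lt_one_of_one_lt₀ hr1) y
  rw [show (1 + r⁻¹) / (1 - r⁻¹) = (r + 1) / (r - 1) by field_simp, div_mul_eq_mul_div,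
    le_div_iff₀ (by linarith)] at hK
  have hpos : 0 < x ⬝ᵥ Bmat b L *ᵥ x := by
    simpa using (Bmat_posDef hb L).dotProduct_mulVec_pos hx
  rw [div_le_div_iff₀ hpos (by linarith), hA, hB, ← hr2]
  nlinarith

/-- For `b > 1` and `L ≥ 1`, the matrix `B_L` is positive definite and for every nonzero
`x ∈ ℝ^L` one has `(xᵀ A_L x)/(xᵀ B_L x) ≤ 2(√b - 1)/(b - 1)`. -/
theorem quad_form_ratio_bound (b : ℝ) (hb : 1 < b) (L : ℕ) (hL : 1 ≤ L) :
    (Bmat b L).PosDef ∧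
    ∀ x : Fin L → ℝ, x ≠ 0 →
      (x ⬝ᵥ (Amat b L).mulVec x) / (x ⬝ᵥ (Bmat b L).mulVec x)
        ≤ 2 * (Real.sqrt b - 1) / (b - 1) :=
  quad_form_ratio_bound_general b hb L
end
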